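/- arXiv:1902.02716 — 3 statements merged into one kernel-verified Lean document; each statement's English description precedes it below -/
import Mathlib

section
/- For each s ∈ S, t ∈ S and j ∈ ℤ/m, the Laurent monomial p*(X^t_j) := ∏_{u∈S, i∈ℤ/m} (A^u_i)^{ε(v^t_j, v^u_i)} in the A-variables is invariant under the substitution R(s)*: that is, replacing each A^s_i by f_A(s)·A^s_i (and leaving all A^u_i with u ≠ s unchanged) in p*(X^t_j) yields p*(X^t_j) again. (In other words, the mutation sequences R(s,i) lie in the peripheral subgroup: they act trivially on the image of the ensemble map.) -/
/-!
Statement 4: the Laurent monomials `p*(X^t_j) = ∏_{u,i} (A^u_i)^{ε(v^t_j, v^u_i)}` are invariant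
under the substitution `R(s)* : A^s_i ↦ f_A(s)·A^s_i` (the `R(s,i)` lie in the peripheral
subgroup).
-/

namespace ClusterWeyl

/-- The exchange matrix of `Q_m(g)`. -/
def epsQ {S : Type*} [DecidableEq S] (ε : S → S → ℤ) (m : ℕ) :
    S × ZMod m → S × ZMod m → ℤ :=
  fun p q =>
    if p.1 = q.1 then
      (if q.2 = p.2 + 1 then 1 else 0) - (if p.2 = q.2 + 1 then 1 else 0)
    else
      (if q.2 = p.2 then ε p.1 q.1 else 0) - (if q.2 = p.2 + 1 then ε p.1 q.1 else 0)

/-- `f_A(s)`, computed from the variable assignment `A`. -/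
def fA {S K : Type*} [DecidableEq S] [Fintype S] [Field K] (m : ℕ) [NeZero m]
    (ε : S → S → ℤ) (A : S × ZMod m → K) (s : S) : K :=
  ∑ i : ZMod m,
    (A (s, i) * A (s, i + 1))⁻¹ *
      (∏ t ∈ Finset.univ.filter fun t => 0 < ε t s, A (t, i) ^ (-ε s t)) *
      (∏ t ∈ Finset.univ.filter fun t => ε t s < 0, A (t, i + 1) ^ (ε s t))

/-- The substitution `R(s)*`: replace each `A^s_i` by `f_A(s)·A^s_i`, leaving the `A^t_i`
with `t ≠ s` unchanged. -/
def Asub {S K : Type*} [DecidableEq S] [Fintype S] [Field K] (m : ℕ) [NeZero m]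
    (ε : S → S → ℤ) (A : S × ZMod m → K) (s : S) : S × ZMod m → K :=
  fun p => if p.1 = s then fA m ε A s * A p else A p

lemma prod_zpow₀' {G ι : Type*} [CommGroupWithZero G] (a : G) (ha : a ≠ 0)
    (s : Finset ι) (f : ι → ℤ) : ∏ i ∈ s, a ^ f i = a ^ (∑ i ∈ s, f i) := by
  classical
  induction s using Finset.cons_induction with
  | empty => simp
  | cons x s hx ih => rw [Finset.prod_cons, Finset.sum_cons, zpow_add₀ ha, ih]

open MvPolynomial in
lemma sum_prod_zpow_ne_zero {ι K : Type*} [Fintype ι] [Field K] [CharZero K]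
    (A : ι → K) (hA : AlgebraicIndependent ℚ A)
    {β : Type*} [Fintype β] [Nonempty β] (c : β → ι → ℤ) :
    (∑ b : β, ∏ p : ι, A p ^ c b p) ≠ 0 := by
  classical
  have hA0 : ∀ p, A p ≠ 0 := fun p => hA.ne_zero p
  set N : ι → ℕ := fun p => Finset.univ.sup fun b => (-(c b p)).toNat with hNdef
  have hN : ∀ b p, 0 ≤ c b p + N p := by
    intro b p
    have h1 : (-(c b p)).toNat ≤ N p :=
      Finset.le_sup (f := fun b => (-(c b p)).toNat) (Finset.mem_univ b)
    have h2 : -(c b p) ≤ (N p : ℤ) := le_trans (Int.self_le_toNat _) (by exact_mod_cast h1)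
    omega
  set e : β → ι → ℕ := fun b p => (c b p + N p).toNat with hedef
  set d : β → (ι →₀ ℕ) := fun b => Finsupp.equivFunOnFinite.symm (e b) with hddef
  set P : MvPolynomial ι ℚ := ∑ b : β, monomial (d b) (1 : ℚ) with hPdef
  have haev : aeval A P = ∑ b : β, ∏ p : ι, A p ^ e b p := by
    rw [hPdef, map_sum]
    refine Finset.sum_congr rfl fun b _ => ?_
    rw [aeval_monomial]
    rw [Finsupp.prod_fintype _ _ (fun i => pow_zero _)]
    simp [hddef]
  have hM : (∑ b : β, ∏ p : ι, A p ^ c b p) * ∏ p : ι, A p ^ (N p : ℤ)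
      = ∑ b : β, ∏ p : ι, A p ^ e b p := by
    rw [Finset.sum_mul]
    refine Finset.sum_congr rfl fun b _ => ?_
    rw [← Finset.prod_mul_distrib]
    refine Finset.prod_congr rfl fun p _ => ?_
    rw [← zpow_add₀ (hA0 p)]
    rw [hedef]
    rw [← zpow_natCast, Int.toNat_of_nonneg (hN b p)]
  have hP : P ≠ 0 := by
    intro h
    have b0 : β := Classical.arbitrary β
    have hc : coeff (d b0) P = ((Finset.univ.filter fun b => d b = d b0).card : ℚ) := by
      rw [hPdef, MvPolynomial.coeff_sum]
      simp [MvPolynomial.coeff_monomial]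
    rw [h, coeff_zero] at hc
    have hmem : b0 ∈ Finset.univ.filter (fun b => d b = d b0) := by simp
    have hcard := Finset.card_pos.mpr ⟨b0, hmem⟩
    rw [eq_comm] at hc
    exact absurd hc (by positivity)
  have haevne : aeval A P ≠ 0 := fun h => hP (hA (by simpa using h))
  rw [haev] at haevne
  rw [← hM] at haevne
  intro h
  exact haevne (by rw [h, zero_mul])

lemma fA_ne_zero {S : Type*} [Fintype S] [DecidableEq S] (d : S → ℤ) (hdpos : ∀ s, 0 < d s)
    (ε : S → S → ℤ) (hskew : ∀ s t, ε s t * d t = -(ε t s * d s))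
    (m : ℕ) [NeZero m] (hm : 2 ≤ m)
    (K : Type*) [Field K] [CharZero K] (A : S × ZMod m → K) (hA : AlgebraicIndependent ℚ A)
    (s : S) : fA m ε A s ≠ 0 := by
  classical
  haveI : Fact (1 < m) := ⟨hm⟩
  have hA0 : ∀ p, A p ≠ 0 := fun p => hA.ne_zero p
  have hii : ∀ i : ZMod m, i + 1 ≠ i := by
    intro i h
    exact one_ne_zero (by rwa [add_eq_left] at h)
  have hss : ε s s = 0 := by
    have h := hskew s s
    have hd := hdpos s
    nlinarith
  set c : ZMod m → S × ZMod m → ℤ := fun i p =>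
    if p.1 = s then -(if p.2 = i then 1 else 0) - (if p.2 = i + 1 then 1 else 0)
    else (if 0 < ε p.1 s ∧ p.2 = i then -ε s p.1 else 0) +
      (if ε p.1 s < 0 ∧ p.2 = i + 1 then ε s p.1 else 0) with hcdef
  have key : fA m ε A s = ∑ i : ZMod m, ∏ p : S × ZMod m, A p ^ c i p := by
    rw [fA]
    refine Finset.sum_congr rfl fun i _ => ?_
    rw [Fintype.prod_prod_type, ← Finset.mul_prod_erase Finset.univ _ (Finset.mem_univ s)]
    have part1 : (∏ k : ZMod m, A (s, k) ^ c i (s, k)) = (A (s, i) * A (s, i + 1))⁻¹ := by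
      have hpt : ∀ k : ZMod m, A (s, k) ^ c i (s, k) =
          (if k = i then (A (s, i))⁻¹ else 1) * (if k = i + 1 then (A (s, i + 1))⁻¹ else 1) := by
        intro k
        simp only [hcdef, if_pos rfl]
        by_cases h1 : k = i <;> by_cases h2 : k = i + 1
        · exact absurd (h1.symm.trans h2).symm (hii i)
        · subst h1; simp [h2]
        · subst h2; simp [h1]
        · simp [h1, h2]
      rw [Finset.prod_congr rfl fun k _ => hpt k, Finset.prod_mul_distrib,
        Finset.prod_ite_eq' Finset.univ i, Finset.prod_ite_eq' Finset.univ (i + 1)]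
      simp [mul_inv, mul_comm]
    have part2 : ∀ u : S, u ≠ s → (∏ k : ZMod m, A (u, k) ^ c i (u, k)) =
        (if 0 < ε u s then A (u, i) ^ (-ε s u) else 1) *
          (if ε u s < 0 then A (u, i + 1) ^ (ε s u) else 1) := by
      intro u hu
      have hpt : ∀ k : ZMod m, A (u, k) ^ c i (u, k) =
          (if k = i then (if 0 < ε u s then A (u, i) ^ (-ε s u) else 1) else 1) *
            (if k = i + 1 then (if ε u s < 0 then A (u, i + 1) ^ (ε s u) else 1) else 1) := by
        intro k
        simp only [hcdef, if_neg hu]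
        rw [zpow_add₀ (hA0 _)]
        congr 1
        · by_cases h1 : k = i
          · subst h1
            by_cases h : 0 < ε u s <;> simp [h]
          · simp [h1]
        · by_cases h2 : k = i + 1
          · subst h2
            by_cases h : ε u s < 0 <;> simp [h]
          · simp [h2]
      rw [Finset.prod_congr rfl fun k _ => hpt k, Finset.prod_mul_distrib,
        Finset.prod_ite_eq' Finset.univ i, Finset.prod_ite_eq' Finset.univ (i + 1)]
      simp
    rw [part1, Finset.prod_congr rfl fun u hu => part2 u (Finset.ne_of_mem_erase hu),
      Finset.prod_mul_distrib]
    have e1 : (∏ u ∈ Finset.univ.erase s, (if 0 < ε u s then A (u, i) ^ (-ε s u) else 1))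
        = ∏ u ∈ Finset.univ.filter fun t => 0 < ε t s, A (u, i) ^ (-ε s u) := by
      rw [Finset.prod_erase _ (by simp [hss]), Finset.prod_filter]
    have e2 : (∏ u ∈ Finset.univ.erase s, (if ε u s < 0 then A (u, i + 1) ^ (ε s u) else 1))
        = ∏ u ∈ Finset.univ.filter fun t => ε t s < 0, A (u, i + 1) ^ (ε s u) := by
      rw [Finset.prod_erase _ (by simp [hss]), Finset.prod_filter]
    rw [e1, e2, mul_assoc]
  rw [key]
  exact sum_prod_zpow_ne_zero A hA c

theorem R_is_peripheral {S : Type*} [Fintype S] [DecidableEq S]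
    (C : S → S → ℤ) (d : S → ℤ)
    (hCdiag : ∀ s, C s s = 2)
    (hCoff : ∀ s t, s ≠ t → C s t ≤ 0)
    (hCzero : ∀ s t, C s t = 0 → C t s = 0)
    (hdpos : ∀ s, 0 < d s)
    (hdgcd : Finset.univ.gcd d = 1)
    (hdsym : ∀ s t, d s * C s t = d t * C t s)
    (ε : S → S → ℤ)
    (hskew : ∀ s t, ε s t * d t = -(ε t s * d s))
    (hCox : ∀ s t, s ≠ t → |ε s t| = - C t s)
    (m : ℕ) [NeZero m] (hm : 2 ≤ m)
    (K : Type*) [Field K] [CharZero K]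
    (A : S × ZMod m → K)
    (hA : AlgebraicIndependent ℚ A)
    (s t : S) (j : ZMod m) :
    ∏ p : S × ZMod m, (Asub m ε A s p) ^ (epsQ ε m (t, j) p) =
      ∏ p : S × ZMod m, (A p) ^ (epsQ ε m (t, j) p) := by
  classical
  haveI : Fact (1 < m) := ⟨hm⟩
  have hf : fA m ε A s ≠ 0 := fA_ne_zero d hdpos ε hskew m hm K A hA s
  have step1 : ∀ p : S × ZMod m, (Asub m ε A s p) ^ (epsQ ε m (t, j) p) =
      (if p.1 = s then (fA m ε A s) ^ (epsQ ε m (t, j) p) else 1) *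
        (A p) ^ (epsQ ε m (t, j) p) := by
    intro p
    rw [Asub]
    by_cases h : p.1 = s
    · rw [if_pos h, if_pos h, mul_zpow]
    · rw [if_neg h, if_neg h, one_mul]
  rw [Finset.prod_congr rfl fun p _ => step1 p, Finset.prod_mul_distrib]
  suffices h2 : (∏ p : S × ZMod m,
      if p.1 = s then (fA m ε A s) ^ (epsQ ε m (t, j) p) else 1) = 1 by
    rw [h2, one_mul]
  rw [Fintype.prod_prod_type]
  have hu : ∀ u : S,
      (∏ k : ZMod m, if ((u, k) : S × ZMod m).1 = s
          then (fA m ε A s) ^ (epsQ ε m (t, j) (u, k)) else 1)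
        = if u = s then ∏ k : ZMod m, (fA m ε A s) ^ (epsQ ε m (t, j) (s, k)) else 1 := by
    intro u
    by_cases h : u = s
    · subst h; simp
    · simp [h]
  rw [Finset.prod_congr rfl fun u _ => hu u, Finset.prod_ite_eq' Finset.univ s,
    if_pos (Finset.mem_univ s), prod_zpow₀' _ hf]
  have hsum : (∑ k : ZMod m, epsQ ε m (t, j) (s, k)) = 0 := by
    by_cases hts : t = s
    · subst hts
      have hpt : ∀ k : ZMod m, epsQ ε m (t, j) (t, k) =
          (if k = j + 1 then 1 else 0) - (if k = j - 1 then 1 else 0) := by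
        intro k
        simp only [epsQ, if_pos rfl]
        congr 1
        simp [eq_sub_iff_add_eq, eq_comm]
      rw [Finset.sum_congr rfl fun k _ => hpt k, Finset.sum_sub_distrib,
        Finset.sum_ite_eq' Finset.univ (j + 1), Finset.sum_ite_eq' Finset.univ (j - 1)]
      simp
    · have hpt : ∀ k : ZMod m, epsQ ε m (t, j) (s, k) =
          (if k = j then ε t s else 0) - (if k = j + 1 then ε t s else 0) := by
        intro k
        simp [epsQ, hts]
      rw [Finset.sum_congr rfl fun k _ => hpt k, Finset.sum_sub_distrib,
        Finset.sum_ite_eq' Finset.univ j, Finset.sum_ite_eq' Finset.univ (j + 1)]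
      simp
  rw [hsum, zpow_zero]

end ClusterWeyl
end

section
/- Set 𝕏_t := ∏_{i∈ℤ/m} X^t_i for t ∈ S. Then: (i) Σ_{i∈ℤ/m} ε(v^t_i, v^u_j) = 0 for all t, u ∈ S and j ∈ ℤ/m, so that each 𝕏_t is a Casimir for the Poisson bracket {X_a, X_b} = ε(a,b) d_b X_a X_b on the X-variables; (ii) R(s)*(𝕏_t) = 𝕏_s^{−1} if t = s and R(s)*(𝕏_t) = 𝕏_t · 𝕏_s^{−C_{st}} if t ≠ s; (iii) consequently the group homomorphism Φ from the root lattice L(g) to the multiplicative group of the field ℚ(X^t_i), given by Φ(Σ_s c_s α_s) = ∏_s 𝕏_s^{c_s}, is injective and satisfies R(s)*(Φ(v)) = Φ(r_s v) for all v ∈ L(g) and s ∈ S, i.e. it is a W(g)-equivariant embedding of L(g) into the monomial Poisson Casimirs. -/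
/-!
Statement 6: the monomials `𝕏_t = ∏_i X^t_i` are monomial Poisson Casimirs, they transform
under `R(s)*` like simple roots, and `Σ c_s α_s ↦ ∏ 𝕏_s^{c_s}` is an injective
`W(g)`-equivariant embedding of the root lattice.
-/

namespace ClusterWeyl

/-- `f_X(s,i) = 1 + Σ_{k=0}^{m-2} X^s_i X^s_{i-1} ⋯ X^s_{i-k}`. -/
def fX {S K : Type*} [Field K] (m : ℕ) (X : S × ZMod m → K) (s : S) (i : ZMod m) : K :=
  1 + ∑ k ∈ Finset.range (m - 1), ∏ l ∈ Finset.range (k + 1), X (s, i - (l : ZMod m))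

/-- The substitution `R(s)*` on the `X`-variables. -/
def RXsub {S K : Type*} [DecidableEq S] [Field K] (m : ℕ)
    (ε : S → S → ℤ) (X : S × ZMod m → K) (s : S) : S × ZMod m → K :=
  fun p =>
    if p.1 = s then
      fX m X s p.2 / (X (s, p.2 - 1) * fX m X s (p.2 - 2))
    else if ε p.1 s < 0 then
      X p * ((X (s, p.2 - 1) * fX m X s (p.2 - 2)) / fX m X s (p.2 - 1)) ^ (-ε p.1 s)
    else if 0 < ε p.1 s then
      X p * ((X (s, p.2) * fX m X s (p.2 - 1)) / fX m X s p.2) ^ (ε p.1 s)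
    else X p

/-- `Φ`, computed from a variable assignment `Y`: `Φ(Σ_s c_s α_s) = ∏_s (∏_i Y^s_i)^{c_s}`. -/
def Phi {S K : Type*} [Fintype S] [Field K] (m : ℕ) [NeZero m]
    (Y : S × ZMod m → K) (c : S → ℤ) : K :=
  ∏ t : S, (∏ i : ZMod m, Y (t, i)) ^ (c t)

/-- The simple reflection `r_s` acting on the root lattice in the basis of simple roots:
`r_s(α_t) = α_t - C_{st} α_s`. -/
def reflect {S : Type*} [Fintype S] [DecidableEq S] (C : S → S → ℤ) (s : S) (c : S → ℤ) :
    S → ℤ :=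
  fun u => if u = s then c s - ∑ t : S, C s t * c t else c u

/-! ### Auxiliary lemmas -/

lemma sum_if_shift {m : ℕ} [NeZero m] (a c : ZMod m) (x : ℤ) :
    ∑ i : ZMod m, (if a = i + c then x else 0) = x := by
  rw [Fintype.sum_eq_single (a - c)]
  · rw [if_pos (by ring)]
  · intro i hi
    rw [if_neg]
    intro h
    exact hi (by rw [h, add_sub_cancel_right])

lemma prod_zpow_sum {α K : Type*} [Field K] {x : K} (hx : x ≠ 0) (s : Finset α) (f : α → ℤ) :
    ∏ t ∈ s, x ^ f t = x ^ (∑ t ∈ s, f t) := by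
  classical
  induction s using Finset.induction_on with
  | empty => simp
  | @insert a s h ih => rw [Finset.prod_insert h, Finset.sum_insert h, ih, zpow_add₀ hx]

lemma prod_shift {K : Type*} [CommMonoid K] (m : ℕ) [NeZero m] (g : ZMod m → K) (c : ZMod m) :
    ∏ i : ZMod m, g (i - c) = ∏ i : ZMod m, g i :=
  Equiv.prod_comp (Equiv.subRight c) g

section AlgInd

set_option linter.unusedSectionVars false

variable {S K : Type*} [Fintype S] [DecidableEq S] [Field K] [CharZero K]
  {m : ℕ} [NeZero m] {X : S × ZMod m → K}

lemma X_ne_zero (hX : AlgebraicIndependent ℚ X) (p : S × ZMod m) : X p ≠ 0 := by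
  intro h
  have h0 : (MvPolynomial.X p : MvPolynomial (S × ZMod m) ℚ) = 0 := by
    apply hX
    simpa using h
  exact MvPolynomial.X_ne_zero p h0

lemma fX_ne_zero (hX : AlgebraicIndependent ℚ X) (s : S) (i : ZMod m) : fX m X s i ≠ 0 := by
  intro h
  set P : MvPolynomial (S × ZMod m) ℚ :=
    1 + ∑ k ∈ Finset.range (m - 1), ∏ l ∈ Finset.range (k + 1),
      MvPolynomial.X (s, i - (l : ZMod m)) with hP
  have hev : MvPolynomial.aeval X P = fX m X s i := by
    simp [hP, fX]
  have h0 : P = 0 := by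
    apply hX
    rw [hev, h, map_zero]
  have hc := congrArg MvPolynomial.constantCoeff h0
  simp [hP, Finset.prod_const] at hc

lemma monomial_inj (hX : AlgebraicIndependent ℚ X) (P N : S → ℕ)
    (h : ∏ t : S, (∏ i : ZMod m, X (t, i)) ^ P t = ∏ t : S, (∏ i : ZMod m, X (t, i)) ^ N t) :
    P = N := by
  classical
  have key : ∀ Q : S → ℕ, ∏ t : S, (∏ i : ZMod m, X (t, i)) ^ Q t =
      MvPolynomial.aeval X (MvPolynomial.monomial
        (Finsupp.equivFunOnFinite.symm (fun p : S × ZMod m => Q p.1)) (1 : ℚ)) := by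
    intro Q
    set d : (S × ZMod m) →₀ ℕ := Finsupp.equivFunOnFinite.symm (fun p : S × ZMod m => Q p.1)
      with hd
    have h1 : (MvPolynomial.monomial d (1 : ℚ)) = ∏ p ∈ d.support, MvPolynomial.X p ^ d p :=
      (MvPolynomial.prod_X_pow_eq_monomial).symm
    have h2 : (∏ p ∈ d.support, (MvPolynomial.X p : MvPolynomial (S × ZMod m) ℚ) ^ d p)
        = ∏ p : S × ZMod m, MvPolynomial.X p ^ d p := by
      apply Finset.prod_subset (Finset.subset_univ _)
      intro p _ hp
      rw [Finsupp.notMem_support_iff.mp hp, pow_zero]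
    have h3 : ∀ p : S × ZMod m, d p = Q p.1 := fun p => rfl
    rw [h1, h2]
    simp only [map_prod, map_pow, MvPolynomial.aeval_X, h3]
    rw [Fintype.prod_prod_type (f := fun x : S × ZMod m => X x ^ Q x.1)]
    exact Finset.prod_congr rfl (fun t _ => (Finset.prod_pow _ _ _).symm)
  rw [key P, key N] at h
  have := hX h
  have hdd := MvPolynomial.monomial_left_injective (one_ne_zero) this
  funext t
  have := congrFun (congrArg (⇑Finsupp.equivFunOnFinite) hdd) (t, (0 : ZMod m))
  simpa using this

/-- Part (ii) as a standalone lemma. -/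
lemma partII (C : S → S → ℤ) (ε : S → S → ℤ)
    (hCox : ∀ s t, s ≠ t → |ε s t| = - C t s)
    (hXn : ∀ p, X p ≠ 0) (hfX : ∀ s i, fX m X s i ≠ 0)
    (s t : S) :
    (∏ i : ZMod m, RXsub m ε X s (t, i)) =
      if t = s then (∏ i : ZMod m, X (s, i))⁻¹
      else (∏ i : ZMod m, X (t, i)) * (∏ i : ZMod m, X (s, i)) ^ (-(C s t)) := by
  have hF : (∏ i : ZMod m, fX m X s i) ≠ 0 :=
    Finset.prod_ne_zero_iff.mpr (fun i _ => hfX s i)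
  have hXs : (∏ i : ZMod m, X (s, i)) ≠ 0 :=
    Finset.prod_ne_zero_iff.mpr (fun i _ => hXn _)
  have hW : (∏ i : ZMod m, (X (s, i - 1) * fX m X s (i - 2)) / fX m X s (i - 1))
      = ∏ i : ZMod m, X (s, i) := by
    rw [Finset.prod_div_distrib, Finset.prod_mul_distrib,
      prod_shift m (fun i => X (s, i)) 1, prod_shift m (fun i => fX m X s i) 2,
      prod_shift m (fun i => fX m X s i) 1, mul_div_assoc, div_self hF, mul_one]
  have hW' : (∏ i : ZMod m, (X (s, i) * fX m X s (i - 1)) / fX m X s i)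
      = ∏ i : ZMod m, X (s, i) := by
    rw [Finset.prod_div_distrib, Finset.prod_mul_distrib,
      prod_shift m (fun i => fX m X s i) 1, mul_div_assoc, div_self hF, mul_one]
  by_cases hts : t = s
  · subst hts
    rw [if_pos rfl]
    simp only [RXsub, if_pos rfl, if_true]
    rw [Finset.prod_div_distrib, Finset.prod_mul_distrib,
      prod_shift m (fun i => X (t, i)) 1, prod_shift m (fun i => fX m X t i) 2,
      mul_comm, ← div_div, div_self hF, one_div]
  · rw [if_neg hts]
    have habs : |ε t s| = - C s t := hCox t s hts
    rcases lt_trichotomy (ε t s) 0 with hlt | heq | hgt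
    · simp only [RXsub, if_neg hts, if_pos hlt]
      rw [Finset.prod_mul_distrib, Finset.prod_zpow, hW]
      rw [show -ε t s = -C s t by rw [← habs, abs_of_neg hlt]]
    · have hC : C s t = 0 := by rw [heq, abs_zero] at habs; omega
      simp only [RXsub, if_neg hts, heq, lt_irrefl, if_neg (lt_irrefl (0:ℤ))]
      rw [hC, neg_zero, zpow_zero, mul_one]
      simp
    · simp only [RXsub, if_neg hts, if_neg (by omega : ¬ ε t s < 0), if_pos hgt]
      rw [Finset.prod_mul_distrib, Finset.prod_zpow, hW']
      rw [show ε t s = -C s t by rw [← habs, abs_of_pos hgt]]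

end AlgInd

theorem Casimirs_and_root_lattice {S : Type*} [Fintype S] [DecidableEq S]
    (C : S → S → ℤ) (d : S → ℤ)
    (hCdiag : ∀ s, C s s = 2)
    (hCoff : ∀ s t, s ≠ t → C s t ≤ 0)
    (hCzero : ∀ s t, C s t = 0 → C t s = 0)
    (hdpos : ∀ s, 0 < d s)
    (hdgcd : Finset.univ.gcd d = 1)
    (hdsym : ∀ s t, d s * C s t = d t * C t s)
    (ε : S → S → ℤ)
    (hskew : ∀ s t, ε s t * d t = -(ε t s * d s))
    (hCox : ∀ s t, s ≠ t → |ε s t| = - C t s)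
    (m : ℕ) [NeZero m] (hm : 2 ≤ m)
    (K : Type*) [Field K] [CharZero K]
    (X : S × ZMod m → K)
    (hX : AlgebraicIndependent ℚ X) :
    -- (i) each `𝕏_t` is a monomial Poisson Casimir:
    (∀ t u : S, ∀ j : ZMod m, ∑ i : ZMod m, epsQ ε m (t, i) (u, j) = 0) ∧
    -- (ii) `R(s)*(𝕏_t) = 𝕏_s⁻¹` if `t = s` and `𝕏_t · 𝕏_s^{-C_{st}}` otherwise:
    (∀ s t : S,
      (∏ i : ZMod m, RXsub m ε X s (t, i)) =
        if t = s then (∏ i : ZMod m, X (s, i))⁻¹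
        else (∏ i : ZMod m, X (t, i)) * (∏ i : ZMod m, X (s, i)) ^ (-(C s t))) ∧
    -- (iii) `Φ` is injective and `W(g)`-equivariant:
    Function.Injective (Phi m X) ∧
    (∀ (s : S) (c : S → ℤ), Phi m (RXsub m ε X s) c = Phi m X (reflect C s c)) := by
  have hXn : ∀ p, X p ≠ 0 := X_ne_zero hX
  have hfX : ∀ s i, fX m X s i ≠ 0 := fX_ne_zero hX
  have hXprod : ∀ t : S, (∏ i : ZMod m, X (t, i)) ≠ 0 :=
    fun t => Finset.prod_ne_zero_iff.mpr (fun i _ => hXn _)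
  have hII := partII C ε hCox hXn hfX
  refine ⟨?_, hII, ?_, ?_⟩
  · -- part (i)
    intro t u j
    unfold epsQ
    simp only
    by_cases htu : t = u
    · simp only [if_pos htu, Finset.sum_sub_distrib]
      rw [sum_if_shift j 1 1]
      rw [show (∑ i : ZMod m, if i = j + 1 then (1:ℤ) else 0) = 1 by
        rw [Finset.sum_ite_eq' Finset.univ (j+1) (fun _ => (1:ℤ))]; simp]
      ring
    · simp only [if_neg htu, Finset.sum_sub_distrib]
      rw [sum_if_shift j 1 (ε t u)]
      rw [show (∑ i : ZMod m, if j = i then ε t u else 0) = ε t u by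
        rw [Finset.sum_ite_eq Finset.univ j (fun _ => ε t u)]; simp]
      ring
  · -- injectivity
    intro c c' h
    have hPhine : ∀ b : S → ℤ, Phi m X b ≠ 0 := fun b =>
      Finset.prod_ne_zero_iff.mpr (fun t _ => zpow_ne_zero _ (hXprod t))
    have hone : ∏ t : S, (∏ i : ZMod m, X (t, i)) ^ (c t - c' t) = 1 := by
      calc ∏ t : S, (∏ i : ZMod m, X (t, i)) ^ (c t - c' t)
          = ∏ t : S, ((∏ i : ZMod m, X (t, i)) ^ (c t) / (∏ i : ZMod m, X (t, i)) ^ (c' t)) :=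
            Finset.prod_congr rfl (fun t _ => zpow_sub₀ (hXprod t) _ _)
        _ = Phi m X c / Phi m X c' := Finset.prod_div_distrib _ _
        _ = 1 := by rw [h, div_self (hPhine c')]
    set a : S → ℤ := fun t => c t - c' t with ha
    have hPNa : ∀ t, a t = ((a t).toNat : ℤ) - ((-(a t)).toNat : ℤ) := fun t => by omega
    have hsplit : ∏ t : S, (∏ i : ZMod m, X (t, i)) ^ (a t).toNat
        = ∏ t : S, (∏ i : ZMod m, X (t, i)) ^ (-(a t)).toNat := by
      have h1 : ∏ t : S, ((∏ i : ZMod m, X (t, i)) ^ (((a t).toNat : ℤ))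
          / (∏ i : ZMod m, X (t, i)) ^ (((-(a t)).toNat : ℤ))) = 1 := by
        rw [← hone]
        exact Finset.prod_congr rfl (fun t _ => by
          rw [← zpow_sub₀ (hXprod t), ← hPNa t])
      rw [Finset.prod_div_distrib] at h1
      have h2 := eq_of_div_eq_one h1
      calc ∏ t : S, (∏ i : ZMod m, X (t, i)) ^ (a t).toNat
          = ∏ t : S, (∏ i : ZMod m, X (t, i)) ^ (((a t).toNat : ℤ)) :=
            Finset.prod_congr rfl (fun t _ => (zpow_natCast _ _).symm)
        _ = ∏ t : S, (∏ i : ZMod m, X (t, i)) ^ (((-(a t)).toNat : ℤ)) := h2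
        _ = ∏ t : S, (∏ i : ZMod m, X (t, i)) ^ (-(a t)).toNat :=
            Finset.prod_congr rfl (fun t _ => zpow_natCast _ _)
    have hPN := monomial_inj hX _ _ hsplit
    funext t
    have := congrFun hPN t
    have hat : a t = 0 := by
      omega
    have : c t - c' t = 0 := hat
    omega
  · -- equivariance
    intro s c
    have hstep : Phi m (RXsub m ε X s) c =
        ∏ t : S, (if t = s then (∏ i : ZMod m, X (s, i))⁻¹
          else (∏ i : ZMod m, X (t, i)) * (∏ i : ZMod m, X (s, i)) ^ (-(C s t))) ^ (c t) := by
      unfold Phi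
      exact Finset.prod_congr rfl (fun t _ => by rw [hII s t])
    rw [hstep]
    unfold Phi reflect
    rw [← Finset.mul_prod_erase Finset.univ _ (Finset.mem_univ s),
        ← Finset.mul_prod_erase Finset.univ
          (fun t => (∏ i : ZMod m, X (t, i)) ^ (if t = s then c s - ∑ u : S, C s u * c u else c t))
          (Finset.mem_univ s)]
    simp only [eq_self_iff_true, if_true, ite_true]
    have hL : ∀ t ∈ Finset.univ.erase s,
        (if t = s then (∏ i : ZMod m, X (s, i))⁻¹
          else (∏ i : ZMod m, X (t, i)) * (∏ i : ZMod m, X (s, i)) ^ (-(C s t))) ^ (c t)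
        = (∏ i : ZMod m, X (t, i)) ^ (c t) * (∏ i : ZMod m, X (s, i)) ^ (-(C s t) * c t) := by
      intro t ht
      rw [if_neg (Finset.ne_of_mem_erase ht), mul_zpow, ← zpow_mul]
    have hR : ∀ t ∈ Finset.univ.erase s,
        (∏ i : ZMod m, X (t, i)) ^ (if t = s then c s - ∑ u : S, C s u * c u else c t)
        = (∏ i : ZMod m, X (t, i)) ^ (c t) := by
      intro t ht
      rw [if_neg (Finset.ne_of_mem_erase ht)]
    rw [Finset.prod_congr rfl hL, Finset.prod_congr rfl hR, Finset.prod_mul_distrib,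
      prod_zpow_sum (hXprod s)]
    have hsum : ∑ t : S, C s t * c t = 2 * c s + ∑ t ∈ Finset.univ.erase s, C s t * c t := by
      rw [← Finset.add_sum_erase Finset.univ _ (Finset.mem_univ s), hCdiag s]
    rw [inv_zpow, ← zpow_neg, ← mul_assoc, mul_comm
      ((∏ i : ZMod m, X (s, i)) ^ (-c s)) _, mul_assoc, ← zpow_add₀ (hXprod s), mul_comm]
    congr 1
    rw [hsum]
    simp only [neg_mul, Finset.sum_neg_distrib]
    ring_nf

end ClusterWeyl
end

section
/- The functions f_A(t) transform under R(s)* like simple roots: R(s)*(f_A(s)) = f_A(s)^{−1}, and R(s)*(f_A(t)) = f_A(t) · f_A(s)^{−C_{st}} for every t ≠ s. -/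
/-!
Statement 7: the functions `f_A(t)` transform under `R(s)*` like simple roots:
`R(s)*(f_A(s)) = f_A(s)⁻¹` and `R(s)*(f_A(t)) = f_A(t) · f_A(s)^{-C_{st}}` for `t ≠ s`.
-/

namespace ClusterWeyl

theorem fA_transforms_like_roots {S : Type*} [Fintype S] [DecidableEq S]
    (C : S → S → ℤ) (d : S → ℤ)
    (hCdiag : ∀ s, C s s = 2)
    (hCoff : ∀ s t, s ≠ t → C s t ≤ 0)
    (hCzero : ∀ s t, C s t = 0 → C t s = 0)
    (hdpos : ∀ s, 0 < d s)
    (hdgcd : Finset.univ.gcd d = 1)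
    (hdsym : ∀ s t, d s * C s t = d t * C t s)
    (ε : S → S → ℤ)
    (hskew : ∀ s t, ε s t * d t = -(ε t s * d s))
    (hCox : ∀ s t, s ≠ t → |ε s t| = - C t s)
    (m : ℕ) [NeZero m] (hm : 2 ≤ m)
    (K : Type*) [Field K] [CharZero K]
    (A : S × ZMod m → K)
    (hA : AlgebraicIndependent ℚ A)
    (s : S) :
    fA m ε (Asub m ε A s) s = (fA m ε A s)⁻¹ ∧
    ∀ t : S, t ≠ s →
      fA m ε (Asub m ε A s) t = fA m ε A t * (fA m ε A s) ^ (-(C s t)) := by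
  classical
  have hεss : ε s s = 0 := by
    have h := hskew s s
    have hd := hdpos s
    nlinarith
  obtain ⟨f, hf⟩ : ∃ f : K, f = fA m ε A s := ⟨_, rfl⟩
  have hAsub : ∀ p : S × ZMod m,
      Asub m ε A s p = (if p.1 = s then f else 1) * A p := by
    intro p
    simp only [Asub, ← hf]
    split_ifs <;> simp
  have hprod : ∀ (g : S → K) (e : S → ℤ) (F : Finset S),
      (∏ u ∈ F, ((if u = s then f else 1) * g u) ^ e u)
        = (if s ∈ F then f ^ e s else 1) * ∏ u ∈ F, g u ^ e u := by
    intro g e F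
    simp only [mul_zpow]
    rw [Finset.prod_mul_distrib]
    congr 1
    have h1 : ∀ u ∈ F, (if u = s then f else 1 : K) ^ e u
        = if u = s then f ^ e u else 1 := by
      intro u _; split_ifs <;> simp
    rw [Finset.prod_congr rfl h1, Finset.prod_ite_eq' F s (fun u => f ^ e u)]
  rw [← hf]
  constructor
  · -- part 1
    have key : fA m ε (Asub m ε A s) s = (f * f)⁻¹ * fA m ε A s := by
      rw [fA, fA, Finset.mul_sum]
      refine Finset.sum_congr rfl fun i _ => ?_
      simp only [hAsub]
      rw [hprod (fun u => A (u, i)) (fun u => -ε s u) _,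
        hprod (fun u => A (u, (i : ZMod m) + 1)) (fun u => ε s u) _]
      simp only [Finset.mem_filter, Finset.mem_univ, true_and, hεss,
        lt_self_iff_false, if_false, eq_self_iff_true, if_true, one_mul, mul_inv]
      ring
    rw [key, ← hf]
    rcases eq_or_ne f 0 with h | h
    · simp [h]
    · rw [mul_inv, mul_assoc, inv_mul_cancel₀ h, mul_one]
  · -- part 2
    intro t ht
    have hc : (if 0 < ε s t then f ^ (-ε t s) else 1) *
        (if ε s t < 0 then f ^ (ε t s) else 1)
        = f ^ (-(C s t)) := by
      have hsk := hskew s t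
      have hds := hdpos s
      have hdt := hdpos t
      have hcox := hCox t s ht
      rcases lt_trichotomy (ε s t) 0 with h | h | h
      · have hts : 0 < ε t s := by nlinarith
        rw [if_neg (by omega), if_pos h, one_mul]
        have : ε t s = -C s t := by rw [← abs_of_pos hts, hcox]
        rw [this]
      · have hts : ε t s = 0 := by nlinarith
        have hC : C s t = 0 := by
          rw [hts] at hcox; simp at hcox; omega
        rw [if_neg (by omega), if_neg (by omega), hC]
        simp
      · have hts : ε t s < 0 := by nlinarith
        rw [if_pos h, if_neg (by omega), mul_one]
        have : -ε t s = -C s t := by rw [← abs_of_neg hts, hcox]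
        rw [this]
    have key : fA m ε (Asub m ε A s) t
        = ((if 0 < ε s t then f ^ (-ε t s) else 1) *
           (if ε s t < 0 then f ^ (ε t s) else 1)) * fA m ε A t := by
      rw [fA, fA, Finset.mul_sum]
      refine Finset.sum_congr rfl fun i _ => ?_
      simp only [hAsub]
      rw [hprod (fun u => A (u, i)) (fun u => -ε t u) _,
        hprod (fun u => A (u, (i : ZMod m) + 1)) (fun u => ε t u) _]
      simp only [Finset.mem_filter, Finset.mem_univ, true_and, if_neg ht, one_mul]
      ring
    rw [key, hc, mul_comm]

end ClusterWeyl
end
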